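/- arXiv:2110.05705 — 3 statements merged into one kernel-verified Lean document; each statement's English description precedes it below -/
import Mathlib

section
/- For a flow v on a manifold, every non-recurrent point has a proper orbit (i.e., an orbit that has a neighborhood in which it is closed); equivalently, every orbit that is not proper consists of recurrent points. -/
open Set Topology Filter

namespace Paper

variable {X : Type*} [TopologicalSpace X]

/-- The orbit of a point under a flow. -/
def orbit (v : Flow ℝ X) (x : X) : Set X := {y | ∃ t : ℝ, y = v t x}

/-- The ω-limit set: ⋂ₙ closure {v_t(x) | t > n}. -/
def omegaLimit (v : Flow ℝ X) (x : X) : Set X :=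
  ⋂ n : ℝ, closure {y | ∃ t : ℝ, n < t ∧ y = v t x}

/-- The α-limit set: ⋂ₙ closure {v_t(x) | t < n}. -/
def alphaLimit (v : Flow ℝ X) (x : X) : Set X :=
  ⋂ n : ℝ, closure {y | ∃ t : ℝ, t < n ∧ y = v t x}

/-- A point is recurrent if it belongs to its ω- or α-limit set. -/
def Recurrent (v : Flow ℝ X) (x : X) : Prop :=
  x ∈ omegaLimit v x ∪ alphaLimit v x

/-- A point is singular if it is fixed by every time map. -/
def Singular (v : Flow ℝ X) (x : X) : Prop := ∀ t : ℝ, v t x = x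

/-- A point is periodic if it has a minimal positive period. -/
def Periodic (v : Flow ℝ X) (x : X) : Prop :=
  ∃ T : ℝ, 0 < T ∧ v T x = x ∧ ∀ t ∈ Set.Ioo 0 T, v t x ≠ x

/-- A closed point: singular or periodic. -/
def IsClosedPt (v : Flow ℝ X) (x : X) : Prop := Singular v x ∨ Periodic v x

/-- A point is non-wandering if for every neighborhood `U` and every `N > 0`
there is `t` with `|t| > N` and `v_t(U) ∩ U ≠ ∅`. -/
def NonWandering (v : Flow ℝ X) (x : X) : Prop :=
  ∀ U ∈ nhds x, ∀ N : ℝ, 0 < N → ∃ t : ℝ, N < |t| ∧ ((v t) '' U ∩ U).Nonempty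

/-- The non-wandering set Ω(v). -/
def nonWanderingSet (v : Flow ℝ X) : Set X := {x | NonWandering v x}

/-- Sing(v): the set of singular points. -/
def singSet (v : Flow ℝ X) : Set X := {x | Singular v x}

/-- Per(v): the union of periodic orbits. -/
def perSet (v : Flow ℝ X) : Set X := {x | Periodic v x}

/-- Cl(v): the set of closed points. -/
def clSet (v : Flow ℝ X) : Set X := {x | IsClosedPt v x}

/-- R(v): the set of non-closed recurrent points. -/
def recSet (v : Flow ℝ X) : Set X := {x | Recurrent v x ∧ ¬ IsClosedPt v x}

/-- P(v): the set of non-closed non-recurrent points. -/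
def pSet (v : Flow ℝ X) : Set X := {x | ¬ Recurrent v x ∧ ¬ IsClosedPt v x}

/-- An invariant subset. -/
def Invariant (v : Flow ℝ X) (A : Set X) : Prop := ∀ t : ℝ, (v t) '' A = A

/-- A proper orbit: an orbit having an open neighborhood in which it is closed. -/
def ProperOrbit (v : Flow ℝ X) (x : X) : Prop :=
  ∃ U : Set X, IsOpen U ∧ orbit v x ⊆ U ∧ orbit v x = closure (orbit v x) ∩ U

/-- A locally dense point: the closure of its orbit has nonempty interior. -/
def LocallyDense (v : Flow ℝ X) (x : X) : Prop :=
  (interior (closure (orbit v x))).Nonempty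

/-- LD(v): the union of locally dense orbits. -/
def ldSet (v : Flow ℝ X) : Set X := {x | LocallyDense v x}

/-- E(v): the union of exceptional orbits (neither proper nor locally dense). -/
def eSet (v : Flow ℝ X) : Set X := {x | ¬ ProperOrbit v x ∧ ¬ LocallyDense v x}

/-- A minimal set: a nonempty closed invariant set with no proper nonempty
closed invariant subset. -/
def IsMinimalSet (v : Flow ℝ X) (A : Set X) : Prop :=
  A.Nonempty ∧ IsClosed A ∧ Invariant v A ∧
    ∀ B ⊆ A, B.Nonempty → IsClosed B → Invariant v B → B = A

end Paper

section Aux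

open Paper

variable {X : Type*} [TopologicalSpace X]

private lemma cont_orbitmap (v : Flow ℝ X) (x : X) : Continuous (fun t : ℝ => v t x) :=
  v.continuous continuous_id continuous_const

/-- If some point of the orbit is in the ω-limit set, then x itself is. -/
private lemma omega_shift (v : Flow ℝ X) (x : X) (s : ℝ)
    (h : v s x ∈ omegaLimit v x) : x ∈ omegaLimit v x := by
  rw [Paper.omegaLimit, Set.mem_iInter]
  intro n
  have h1 : v s x ∈ closure {y | ∃ t : ℝ, n + s < t ∧ y = v t x} := by
    have := Set.mem_iInter.mp h (n + s)
    exact this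
  have hx : x = v (-s) (v s x) := by
    rw [← v.map_add]
    simp [v.map_zero_apply]
  have himg : v (-s) '' {y | ∃ t : ℝ, n + s < t ∧ y = v t x}
      ⊆ {y | ∃ t : ℝ, n < t ∧ y = v t x} := by
    rintro _ ⟨_, ⟨t, ht, rfl⟩, rfl⟩
    exact ⟨-s + t, by linarith, (v.map_add _ _ _).symm⟩
  have h2 : v (-s) (v s x) ∈ closure {y | ∃ t : ℝ, n < t ∧ y = v t x} := by
    have := image_closure_subset_closure_image (f := v (-s))
      (s := {y | ∃ t : ℝ, n + s < t ∧ y = v t x})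
      (v.continuous continuous_const continuous_id)
    exact closure_mono himg (this ⟨_, h1, rfl⟩)
  rwa [← hx] at h2

/-- If some point of the orbit is in the α-limit set, then x itself is. -/
private lemma alpha_shift (v : Flow ℝ X) (x : X) (s : ℝ)
    (h : v s x ∈ alphaLimit v x) : x ∈ alphaLimit v x := by
  rw [Paper.alphaLimit, Set.mem_iInter]
  intro n
  have h1 : v s x ∈ closure {y | ∃ t : ℝ, t < n + s ∧ y = v t x} :=
    Set.mem_iInter.mp h (n + s)
  have hx : x = v (-s) (v s x) := by
    rw [← v.map_add]
    simp [v.map_zero_apply]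
  have himg : v (-s) '' {y | ∃ t : ℝ, t < n + s ∧ y = v t x}
      ⊆ {y | ∃ t : ℝ, t < n ∧ y = v t x} := by
    rintro _ ⟨_, ⟨t, ht, rfl⟩, rfl⟩
    exact ⟨-s + t, by linarith, (v.map_add _ _ _).symm⟩
  have h2 : v (-s) (v s x) ∈ closure {y | ∃ t : ℝ, t < n ∧ y = v t x} := by
    have := image_closure_subset_closure_image (f := v (-s))
      (s := {y | ∃ t : ℝ, t < n + s ∧ y = v t x})
      (v.continuous continuous_const continuous_id)
    exact closure_mono himg (this ⟨_, h1, rfl⟩)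
  rwa [← hx] at h2

/-- In a Hausdorff space, the closure of an orbit is contained in the orbit
together with its ω- and α-limit sets. -/
private lemma closure_orbit_subset [T2Space X] (v : Flow ℝ X) (x : X) :
    closure (orbit v x) ⊆ orbit v x ∪ omegaLimit v x ∪ alphaLimit v x := by
  intro y hy
  set f : ℝ → X := fun t => v t x with hf
  set F : Filter ℝ := Filter.comap f (𝓝 y) with hF
  have hFne : F.NeBot := by
    rw [hF, Filter.comap_neBot_iff]
    intro U hU
    rcases mem_closure_iff_nhds.mp hy U hU with ⟨z, hzU, t, rfl⟩
    exact ⟨t, hzU⟩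
  by_cases hT : (F ⊓ Filter.atTop).NeBot
  · left; right
    rw [Paper.omegaLimit, Set.mem_iInter]
    intro n
    rw [mem_closure_iff_nhds]
    intro U hU
    have h1 : f ⁻¹' U ∈ F := Filter.preimage_mem_comap hU
    have h2 : Set.Ioi n ∈ (Filter.atTop : Filter ℝ) := Ioi_mem_atTop n
    have h3 : f ⁻¹' U ∩ Set.Ioi n ∈ F ⊓ Filter.atTop :=
      Filter.inter_mem_inf h1 h2
    rcases hT.nonempty_of_mem h3 with ⟨t, htU, htn⟩
    exact ⟨f t, htU, t, htn, rfl⟩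
  · by_cases hB : (F ⊓ Filter.atBot).NeBot
    · right
      rw [Paper.alphaLimit, Set.mem_iInter]
      intro n
      rw [mem_closure_iff_nhds]
      intro U hU
      have h1 : f ⁻¹' U ∈ F := Filter.preimage_mem_comap hU
      have h2 : Set.Iio n ∈ (Filter.atBot : Filter ℝ) := Iio_mem_atBot n
      have h3 : f ⁻¹' U ∩ Set.Iio n ∈ F ⊓ Filter.atBot :=
        Filter.inter_mem_inf h1 h2
      rcases hB.nonempty_of_mem h3 with ⟨t, htU, htn⟩
      exact ⟨f t, htU, t, htn, rfl⟩
    · left; left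
      -- F contains a bounded set, hence a compact one; get a cluster point.
      have hTbot : F ⊓ Filter.atTop = ⊥ := Filter.not_neBot.mp hT
      have hBbot : F ⊓ Filter.atBot = ⊥ := Filter.not_neBot.mp hB
      rcases Filter.inf_eq_bot_iff.mp hTbot with ⟨A, hA, V, hV, hAV⟩
      rcases Filter.inf_eq_bot_iff.mp hBbot with ⟨A', hA', V', hV', hAV'⟩
      rcases Filter.mem_atTop_sets.mp hV with ⟨b, hb⟩
      rcases Filter.mem_atBot_sets.mp hV' with ⟨a, ha⟩
      have hsub : A ∩ A' ⊆ Set.Icc a b := by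
        rintro t ⟨htA, htA'⟩
        constructor
        · by_contra hlt
          push_neg at hlt
          exact Set.eq_empty_iff_forall_notMem.mp hAV' t ⟨htA', ha t hlt.le⟩
        · by_contra hlt
          push_neg at hlt
          exact Set.eq_empty_iff_forall_notMem.mp hAV t ⟨htA, hb t hlt.le⟩
      have hK : Set.Icc a b ∈ F :=
        Filter.mem_of_superset (Filter.inter_mem hA hA') hsub
      have hle : F ≤ Filter.principal (Set.Icc a b) := Filter.le_principal_iff.mpr hK
      rcases (isCompact_Icc (a := a) (b := b)).exists_clusterPt hle with ⟨t, _, hcp⟩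
      -- f t = y
      have hmain : NeBot (𝓝 (f t) ⊓ 𝓝 y) := by
        have h1 : Filter.map f (𝓝 t ⊓ F) ≤ 𝓝 (f t) :=
          le_trans (Filter.map_mono inf_le_left) ((cont_orbitmap v x).tendsto t)
        have h2 : Filter.map f (𝓝 t ⊓ F) ≤ 𝓝 y :=
          le_trans (Filter.map_mono inf_le_right) Filter.map_comap_le
        have : NeBot (Filter.map f (𝓝 t ⊓ F)) := Filter.NeBot.map hcp f
        exact this.mono (le_inf h1 h2)
      exact ⟨t, (eq_of_nhds_neBot hmain).symm⟩

end Aux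


/-- for a flow on a manifold, every non-recurrent point has a proper
orbit; equivalently every non-proper orbit consists of recurrent points. -/
theorem nonRecurrent_properOrbit {n : ℕ} {M : Type*} [TopologicalSpace M] [T2Space M]
    [ChartedSpace (EuclideanSpace ℝ (Fin n)) M] (v : Flow ℝ M) :
    (∀ x : M, ¬ Paper.Recurrent v x → Paper.ProperOrbit v x) ∧
      ∀ x : M, ¬ Paper.ProperOrbit v x → Paper.Recurrent v x := by
  have main : ∀ x : M, ¬ Paper.Recurrent v x → Paper.ProperOrbit v x := by
    intro x hx
    have hxo : x ∉ Paper.omegaLimit v x := fun h => hx (Or.inl h)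
    have hxa : x ∉ Paper.alphaLimit v x := fun h => hx (Or.inr h)
    set C : Set M := Paper.omegaLimit v x ∪ Paper.alphaLimit v x with hC
    have hCclosed : IsClosed C :=
      IsClosed.union (isClosed_iInter fun _ => isClosed_closure)
        (isClosed_iInter fun _ => isClosed_closure)
    have horbC : Disjoint (Paper.orbit v x) C := by
      rw [Set.disjoint_left]
      rintro y ⟨t, rfl⟩ hyC
      rcases hyC with h | h
      · exact hxo (omega_shift v x t h)
      · exact hxa (alpha_shift v x t h)
    refine ⟨Cᶜ, hCclosed.isOpen_compl, fun y hy => horbC.subset_compl_right hy, ?_⟩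
    apply Set.Subset.antisymm
    · exact Set.subset_inter subset_closure (fun y hy => horbC.subset_compl_right hy)
    · rintro y ⟨hy1, hy2⟩
      rcases closure_orbit_subset v x hy1 with (h | h) | h
      · exact h
      · exact absurd (Or.inl h) hy2
      · exact absurd (Or.inr h) hy2
  exact ⟨main, fun x h => by_contra fun hr => h (main x hr)⟩
end

section
/- Let v be a flow on a Hausdorff space X and x a non-recurrent point whose orbit O(x) is proper. Then closure(O(x)) \ O(x) = α(x) ∪ ω(x). -/
open Set Topology Filter

/-- for a non-recurrent point with proper orbit,
closure(O(x)) \\ O(x) = α(x) ∪ ω(x). -/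
theorem closure_orbit_diff_eq_limits {X : Type*} [TopologicalSpace X] [T2Space X]
    (v : Flow ℝ X) (x : X) (hx : ¬ Paper.Recurrent v x) (hp : Paper.ProperOrbit v x) :
    closure (Paper.orbit v x) \ Paper.orbit v x =
      Paper.alphaLimit v x ∪ Paper.omegaLimit v x := by
  have hc : ∀ t : ℝ, Continuous (v t) := fun t => v.continuous continuous_const continuous_id
  -- shifting points of closures
  have shift : ∀ (s : ℝ) (S T : Set X), (v s) '' S ⊆ T → ∀ z ∈ closure S, v s z ∈ closure T := by
    intro s S T hST z hz
    exact closure_mono hST (image_closure_subset_closure_image (hc s) ⟨z, hz, rfl⟩)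
  -- if a point of the orbit is in ω(x) (resp. α(x)), then x is recurrent
  have hxo : ∀ s : ℝ, v s x ∉ Paper.omegaLimit v x := by
    intro s hs
    apply hx; left
    refine Set.mem_iInter.2 fun n => ?_
    have h1 : v s x ∈ closure {y | ∃ t : ℝ, n + s < t ∧ y = v t x} :=
      Set.mem_iInter.1 hs (n + s)
    have h2 := shift (-s) _ {y | ∃ t : ℝ, n < t ∧ y = v t x} ?_ _ h1
    · have hvx : v (-s) (v s x) = x := by rw [← v.map_add]; simp
      rwa [hvx] at h2
    · rintro y ⟨z, ⟨t, ht, rfl⟩, rfl⟩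
      exact ⟨-s + t, by linarith, (v.map_add (-s) t x).symm⟩
  have hxa : ∀ s : ℝ, v s x ∉ Paper.alphaLimit v x := by
    intro s hs
    apply hx; right
    refine Set.mem_iInter.2 fun n => ?_
    have h1 : v s x ∈ closure {y | ∃ t : ℝ, t < n + s ∧ y = v t x} :=
      Set.mem_iInter.1 hs (n + s)
    have h2 := shift (-s) _ {y | ∃ t : ℝ, t < n ∧ y = v t x} ?_ _ h1
    · have hvx : v (-s) (v s x) = x := by rw [← v.map_add]; simp
      rwa [hvx] at h2
    · rintro y ⟨z, ⟨t, ht, rfl⟩, rfl⟩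
      exact ⟨-s + t, by linarith, (v.map_add (-s) t x).symm⟩
  -- the limit sets are contained in the closure of the orbit
  have hsubA : Paper.alphaLimit v x ⊆ closure (Paper.orbit v x) := by
    intro y hy
    have h0 := Set.mem_iInter.1 hy 0
    refine closure_mono ?_ h0
    rintro z ⟨t, -, rfl⟩
    exact ⟨t, rfl⟩
  have hsubO : Paper.omegaLimit v x ⊆ closure (Paper.orbit v x) := by
    intro y hy
    have h0 := Set.mem_iInter.1 hy 0
    refine closure_mono ?_ h0
    rintro z ⟨t, -, rfl⟩
    exact ⟨t, rfl⟩
  -- key decomposition using compactness of the middle arc (T2 ⇒ closed)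
  have key : ∀ (y : X), y ∈ closure (Paper.orbit v x) → y ∉ Paper.orbit v x →
      ∀ n : ℝ, y ∈ closure {z | ∃ t : ℝ, t < -n ∧ z = v t x} ∪
               closure {z | ∃ t : ℝ, n < t ∧ z = v t x} := by
    intro y hyc hyo n
    set A := {z : X | ∃ t : ℝ, t < -n ∧ z = v t x} with hA
    set B := {z : X | ∃ t : ℝ, n < t ∧ z = v t x} with hB
    set M := (fun t : ℝ => v t x) '' Set.Icc (-n) n with hM
    have hMc : IsClosed M := by
      have hcont : Continuous fun t : ℝ => v t x :=
        v.continuous continuous_id continuous_const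
      exact ((isCompact_Icc).image hcont).isClosed
    have horb : Paper.orbit v x ⊆ A ∪ M ∪ B := by
      rintro z ⟨t, rfl⟩
      rcases lt_or_ge t (-n) with h | h
      · exact Or.inl (Or.inl ⟨t, h, rfl⟩)
      rcases le_or_gt t n with h' | h'
      · exact Or.inl (Or.inr ⟨t, ⟨h, h'⟩, rfl⟩)
      · exact Or.inr ⟨t, h', rfl⟩
    have h1 : closure (Paper.orbit v x) ⊆ closure A ∪ M ∪ closure B := by
      calc closure (Paper.orbit v x) ⊆ closure (A ∪ M ∪ B) := closure_mono horb
        _ = closure A ∪ closure M ∪ closure B := by rw [closure_union, closure_union]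
        _ = closure A ∪ M ∪ closure B := by rw [hMc.closure_eq]
    rcases h1 hyc with (h | h) | h
    · exact Or.inl h
    · exfalso
      obtain ⟨t, -, rfl⟩ := h
      exact hyo ⟨t, rfl⟩
    · exact Or.inr h
  ext y
  constructor
  · rintro ⟨hyc, hyo⟩
    by_cases hω : y ∈ Paper.omegaLimit v x
    · exact Or.inr hω
    · left
      simp only [Paper.omegaLimit, Set.mem_iInter, not_forall] at hω
      obtain ⟨m, hm⟩ := hω
      refine Set.mem_iInter.2 fun n => ?_
      set k := max m (-n) with hk
      rcases key y hyc hyo k with h | h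
      · refine closure_mono ?_ h
        rintro z ⟨t, ht, rfl⟩
        have hkn : -n ≤ k := le_max_right m (-n)
        exact ⟨t, by linarith, rfl⟩
      · exfalso; apply hm
        refine closure_mono ?_ h
        rintro z ⟨t, ht, rfl⟩
        have hkm : m ≤ k := le_max_left m (-n)
        exact ⟨t, by linarith, rfl⟩
  · rintro (h | h)
    · refine ⟨hsubA h, ?_⟩
      rintro ⟨s, rfl⟩
      exact hxa s h
    · refine ⟨hsubO h, ?_⟩
      rintro ⟨s, rfl⟩
      exact hxo s h
end

section
/- Let v be a flow on a compact surface such that v is non-wandering. Then the set of recurrent points (closed points plus non-closed recurrent points) is dense in the surface: S = closure(Cl(v) ∪ R(v)). -/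
open Set Topology Filter

/-- for a non-wandering flow on a compact surface, the set of
recurrent points (closed points plus non-closed recurrent points) is dense:
S = closure(Cl(v) ∪ R(v)). -/
theorem nonwandering_recurrent_dense {S : Type*} [TopologicalSpace S] [T2Space S]
    [ChartedSpace (EuclideanSpace ℝ (Fin 2)) S] [CompactSpace S] (v : Flow ℝ S)
    (hnw : ∀ x : S, Paper.NonWandering v x) :
    (Set.univ : Set S) = closure (Paper.clSet v ∪ Paper.recSet v) := by
  haveI : TopologicalSpace.MetrizableSpace S :=
    Manifold.metrizableSpace (modelWithCornersSelf ℝ (EuclideanSpace ℝ (Fin 2))) S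
  letI : MetricSpace S := TopologicalSpace.metrizableSpaceMetric S
  -- The good sets
  set G : ℕ → Set S :=
    fun k => {x | ∃ t : ℝ, (k : ℝ) < |t| ∧ dist (v t x) x < 1 / (k + 1)} with hGdef
  have hopen : ∀ k, IsOpen (G k) := by
    intro k
    have : G k = ⋃ (t : ℝ) (_ : (k : ℝ) < |t|), {x | dist (v t x) x < 1 / (k + 1)} := by
      ext x
      simp [hGdef]
    rw [this]
    refine isOpen_iUnion fun t => isOpen_iUnion fun _ => ?_
    have hc : Continuous fun x : S => dist (v t x) x :=
      (v.continuous continuous_const continuous_id).dist continuous_id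
    exact isOpen_lt hc continuous_const
  have hdense : ∀ k, Dense (G k) := by
    intro k
    rw [dense_iff_inter_open]
    intro W hW hWne
    obtain ⟨z, hz⟩ := hWne
    obtain ⟨ε, hε, hball⟩ := Metric.isOpen_iff.1 hW z hz
    have hk1 : (0 : ℝ) < 1 / (2 * ((k : ℝ) + 1)) := by positivity
    set r : ℝ := min ε (1 / (2 * ((k : ℝ) + 1))) with hr
    have hr0 : 0 < r := lt_min hε hk1
    obtain ⟨t, ht, q, hq⟩ :=
      hnw z (Metric.ball z r) (Metric.ball_mem_nhds z hr0) ((k : ℝ) + 1) (by positivity)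
    obtain ⟨⟨y, hy, rfl⟩, hq2⟩ := hq
    refine ⟨y, ?_, t, ?_, ?_⟩
    · exact hball (Metric.ball_subset_ball (min_le_left _ _) hy)
    · exact lt_trans (by exact_mod_cast lt_add_one (k : ℝ)) ht
    · have h1 : dist (v t y) z < r := hq2
      have h2 : dist z y < r := by rwa [dist_comm]
      calc dist (v t y) y ≤ dist (v t y) z + dist z y := dist_triangle _ _ _
        _ < r + r := add_lt_add h1 h2
        _ ≤ 1 / (2 * ((k : ℝ) + 1)) + 1 / (2 * ((k : ℝ) + 1)) :=
            add_le_add (min_le_right _ _) (min_le_right _ _)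
        _ = 1 / ((k : ℝ) + 1) := by field_simp; norm_num
  have hBaire : Dense (⋂ k, G k) := dense_iInter_of_isOpen hopen hdense
  have hrec : (⋂ k, G k) ⊆ Paper.clSet v ∪ Paper.recSet v := by
    intro x hx
    have hx' : ∀ k : ℕ, ∃ t : ℝ, (k : ℝ) < |t| ∧ dist (v t x) x < 1 / (k + 1) := by
      intro k; exact Set.mem_iInter.1 hx k
    choose t ht1 ht2 using hx'
    have hRec : Paper.Recurrent v x := by
      by_cases hpos : ∀ m : ℕ, ∃ k, m ≤ k ∧ 0 ≤ t k
      · -- x ∈ ω(x)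
        left
        refine Set.mem_iInter.2 fun n => ?_
        rw [Metric.mem_closure_iff]
        intro ε hε
        obtain ⟨m₀, hm₀⟩ := exists_nat_gt n
        obtain ⟨m₁, hm₁⟩ := exists_nat_one_div_lt hε
        obtain ⟨k, hk, hk0⟩ := hpos (max m₀ m₁)
        have htk : (k : ℝ) < t k := by
          have := ht1 k; rwa [abs_of_nonneg hk0] at this
        refine ⟨v (t k) x, ⟨t k, ?_, rfl⟩, ?_⟩
        · calc n < (m₀ : ℝ) := hm₀
            _ ≤ (k : ℝ) := by exact_mod_cast le_trans (le_max_left _ _) hk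
            _ < t k := htk
        · rw [dist_comm]
          calc dist (v (t k) x) x < 1 / ((k : ℝ) + 1) := ht2 k
            _ ≤ 1 / ((m₁ : ℝ) + 1) := by
                apply one_div_le_one_div_of_le (by positivity)
                have : (m₁ : ℝ) ≤ (k : ℝ) := by
                  exact_mod_cast le_trans (le_max_right _ _) hk
                linarith
            _ < ε := hm₁
      · -- x ∈ α(x)
        right
        push_neg at hpos
        obtain ⟨m, hm⟩ := hpos
        refine Set.mem_iInter.2 fun n => ?_
        rw [Metric.mem_closure_iff]
        intro ε hε
        obtain ⟨m₀, hm₀⟩ := exists_nat_gt (-n)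
        obtain ⟨m₁, hm₁⟩ := exists_nat_one_div_lt hε
        set k := max m (max m₀ m₁) with hkdef
        have hkm : m ≤ k := le_max_left _ _
        have htneg : t k < 0 := hm k hkm
        have htk : t k < -(k : ℝ) := by
          have := ht1 k
          rw [abs_of_neg htneg] at this
          linarith
        refine ⟨v (t k) x, ⟨t k, ?_, rfl⟩, ?_⟩
        · have h1 : (m₀ : ℝ) ≤ (k : ℝ) := by
            exact_mod_cast le_trans (le_max_left _ _) (le_max_right m _)
          calc t k < -(k : ℝ) := htk
            _ ≤ -(m₀ : ℝ) := by linarith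
            _ < n := by linarith
        · rw [dist_comm]
          calc dist (v (t k) x) x < 1 / ((k : ℝ) + 1) := ht2 k
            _ ≤ 1 / ((m₁ : ℝ) + 1) := by
                apply one_div_le_one_div_of_le (by positivity)
                have : (m₁ : ℝ) ≤ (k : ℝ) := by
                  exact_mod_cast le_trans (le_max_right _ _) (le_max_right m _)
                linarith
            _ < ε := hm₁
    by_cases hcl : Paper.IsClosedPt v x
    · exact Or.inl hcl
    · exact Or.inr ⟨hRec, hcl⟩
  have : Dense (Paper.clSet v ∪ Paper.recSet v) := hBaire.mono hrec
  exact this.closure_eq.symm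
end
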